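/- Let z₁, z₂, Q, J₁₀, J₂₀, c₁₀^{a,m} ∈ ℝ with z₁ ≠ 0, z₂ ≠ 0, z₁ ≠ z₂, I₀ := z₁J₁₀ + z₂J₂₀, T₀ := J₁₀ + J₂₀ ≠ 0. Let c₁₀(y) := e^{z₁z₂T₀y}·c₁₀^{a,m} + (J₁₀Q/(z₁T₀))·(e^{z₁z₂T₀y} − 1) and σ(y) := (z₁ − z₂)z₁c₁₀(y) − z₂Q, and suppose σ(s) > 0 for all s ∈ [0, y]. Then ∫₀^y z₁I₀c₁₀(s)²/σ(s) ds = I₀·(c₁₀(y) − c₁₀^{a,m})/(z₁z₂(z₁ − z₂)T₀) + (z₂Q/(z₁²(z₁ − z₂)²))·(ln σ(y) − ln σ(0)) − J₁₀²·y·Q/(z₁T₀). -/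

import Mathlib

/-!
`c₁₀` solves the affine equation `c' = α c + β` and `σ = k c + m` is affine in `c`, so
`σ' = k c'`. Hence, whenever the polynomial identity
`D x² = (A (α x + β) + C) (k x + m) + B k (α x + β)` holds, the integrand `D c² / σ` equals
`A c' + B σ' / σ + C`, whose antiderivative is `A c + B log σ + C s`. For the `S₅` integrand the
coefficients are found by partial fractions in `c`; the identity only closes because
`I₀ = (z₁ - z₂) J₁₀ + z₂ T₀`.
-/

open Real Set

theorem hasDerivAt_exp_mul_affine (a p q s : ℝ) :
    HasDerivAt (fun t => exp (a * t) * p + q * (exp (a * t) - 1))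
      (a * (exp (a * s) * p + q * (exp (a * s) - 1)) + a * q) s := by
  have hexp : HasDerivAt (fun t => exp (a * t)) (exp (a * s) * a) s := by
    simpa using ((hasDerivAt_id s).const_mul a).exp
  refine ((hexp.mul_const p).add ((hexp.sub_const 1).const_mul q)).congr_deriv ?_
  ring

theorem integral_mul_sq_div_of_affine_ode {c σ : ℝ → ℝ} {α β k m A B C D a b : ℝ}
    (hc : ∀ s, HasDerivAt c (α * c s + β) s) (hσ : ∀ s, σ s = k * c s + m)
    (hσpos : ∀ s ∈ uIcc a b, 0 < σ s)
    (hpf : ∀ x, D * x ^ 2 = (A * (α * x + β) + C) * (k * x + m) + B * k * (α * x + β)) :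
    ∫ s in a..b, D * c s ^ 2 / σ s =
      A * (c b - c a) + B * (log (σ b) - log (σ a)) + C * (b - a) := by
  have hσ_deriv : ∀ s, HasDerivAt σ (k * (α * c s + β)) s := fun s => by
    simpa [funext hσ] using ((hc s).const_mul k).add_const m
  have hc_cont : Continuous c := continuous_iff_continuousAt.2 fun s => (hc s).continuousAt
  have hσ_cont : Continuous σ := continuous_iff_continuousAt.2 fun s => (hσ_deriv s).continuousAt
  have hF : ∀ s ∈ uIcc a b,
      HasDerivAt (fun t => A * c t + B * log (σ t) + C * t) (D * c s ^ 2 / σ s) s := by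
    intro s hs
    have hσs : σ s ≠ 0 := (hσpos s hs).ne'
    refine ((((hc s).const_mul A).add (((hσ_deriv s).log hσs).const_mul B)).add
      ((hasDerivAt_id s).const_mul C)).congr_deriv ?_
    have hpf_s : D * c s ^ 2 = (A * (α * c s + β) + C) * σ s + B * k * (α * c s + β) := by
      rw [hpf, hσ]
    field_simp
    linear_combination -hpf_s
  have hint : IntervalIntegrable (fun s => D * c s ^ 2 / σ s) MeasureTheory.volume a b :=
    ((continuous_const.mul (hc_cont.pow 2)).continuousOn.div hσ_cont.continuousOn
      fun s hs => (hσpos s hs).ne').intervalIntegrable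
  rw [intervalIntegral.integral_eq_sub_of_hasDerivAt hF hint]
  ring

theorem S5_partial_fraction {z₁ z₂ Q J₁₀ I₀ T₀ : ℝ} (hz₁ : z₁ ≠ 0) (hz₂ : z₂ ≠ 0)
    (hz₁₂ : z₁ ≠ z₂) (hT₀ : T₀ ≠ 0) (hI₀ : I₀ = (z₁ - z₂) * J₁₀ + z₂ * T₀) (x : ℝ) :
    z₁ * I₀ * x ^ 2 =
      (I₀ / (z₁ * z₂ * (z₁ - z₂) * T₀) * (z₁ * z₂ * T₀ * x + z₂ * J₁₀ * Q) +
          -(J₁₀ ^ 2 * Q / (z₁ * T₀))) * ((z₁ - z₂) * z₁ * x + -(z₂ * Q)) +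
        z₂ * Q / (z₁ ^ 2 * (z₁ - z₂) ^ 2) * ((z₁ - z₂) * z₁) *
          (z₁ * z₂ * T₀ * x + z₂ * J₁₀ * Q) := by
  have hz₁₂' : z₁ - z₂ ≠ 0 := sub_ne_zero.mpr hz₁₂
  field_simp
  rw [hI₀]
  ring

/-- Integral identity for `S₅` in (3.42). -/
theorem integral_identity_S5_middle
    (z₁ z₂ Q J₁₀ J₂₀ c₁₀am y : ℝ)
    (hz₁ : z₁ ≠ 0) (hz₂ : z₂ ≠ 0) (hz₁₂ : z₁ ≠ z₂)
    (I₀ T₀ : ℝ) (hI₀ : I₀ = z₁ * J₁₀ + z₂ * J₂₀) (hT₀ : T₀ = J₁₀ + J₂₀)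
    (hT₀ne : T₀ ≠ 0)
    (c₁₀ σ : ℝ → ℝ)
    (hc₁₀ : ∀ s, c₁₀ s = Real.exp (z₁ * z₂ * T₀ * s) * c₁₀am +
      (J₁₀ * Q / (z₁ * T₀)) * (Real.exp (z₁ * z₂ * T₀ * s) - 1))
    (hσ : ∀ s, σ s = (z₁ - z₂) * z₁ * c₁₀ s - z₂ * Q)
    (hy : 0 ≤ y) (hσpos : ∀ s ∈ Set.Icc 0 y, 0 < σ s) :
    (∫ s in (0 : ℝ)..y, z₁ * I₀ * (c₁₀ s) ^ 2 / σ s) =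
      I₀ * (c₁₀ y - c₁₀am) / (z₁ * z₂ * (z₁ - z₂) * T₀) +
      (z₂ * Q / (z₁ ^ 2 * (z₁ - z₂) ^ 2)) * (Real.log (σ y) - Real.log (σ 0)) -
      J₁₀ ^ 2 * y * Q / (z₁ * T₀) := by
  have hI : I₀ = (z₁ - z₂) * J₁₀ + z₂ * T₀ := by rw [hI₀, hT₀]; ring
  have hode : ∀ s, HasDerivAt c₁₀ (z₁ * z₂ * T₀ * c₁₀ s + z₂ * J₁₀ * Q) s := fun s => by
    rw [funext hc₁₀]
    convert hasDerivAt_exp_mul_affine (z₁ * z₂ * T₀) c₁₀am (J₁₀ * Q / (z₁ * T₀)) s using 2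
    field_simp
  have hc₁₀_zero : c₁₀ 0 = c₁₀am := by simp [hc₁₀]
  rw [integral_mul_sq_div_of_affine_ode hode (fun s => by rw [hσ]; ring)
    (uIcc_of_le hy ▸ hσpos) (S5_partial_fraction hz₁ hz₂ hz₁₂ hT₀ne hI), hc₁₀_zero]
  ring
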